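/- In the standing setup, the linear span of the vectors {vec Ψ(W_i, W_j) : 1 ≤ i ≤ j ≤ d} equals the linear span of the vectors {vec Ψ(C_r, C_s) : 1 ≤ r < s ≤ d}. In particular, rank(Ω) equals the rank of the d₁²d₂² × d(d−1)/2 matrix D whose columns are vec Ψ(C_r, C_s) for 1 ≤ r < s ≤ d. -/

import Mathlib

open Matrix

/-- The flattening of the 4-way array `Ψ(D,F)`: the function on quadruples `(i,j,k,ℓ)` with
value `d_{i,k} f_{j,ℓ} + d_{j,ℓ} f_{i,k} − d_{i,ℓ} f_{j,k} − d_{j,k} f_{i,ℓ}`. -/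
def vecPsi {d₁ d₂ : ℕ} (D F : Matrix (Fin d₁) (Fin d₂) ℝ) :
    Fin d₁ × Fin d₁ × Fin d₂ × Fin d₂ → ℝ :=
  fun q => D q.1 q.2.2.1 * F q.2.1 q.2.2.2 + D q.2.1 q.2.2.2 * F q.1 q.2.2.1
    - D q.1 q.2.2.2 * F q.2.1 q.2.2.1 - D q.2.1 q.2.2.1 * F q.1 q.2.2.2

/-!
Both spans are the image of `span {C_ℓ} × span {C_ℓ}` under the bilinear map `Ψ`, because
`W = C Θ⁻¹` and `C = W Θ` span the same space. Since `Ψ` is symmetric, the pairs `i ≤ j` already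
span that image, and since moreover `Ψ(C_r, C_r) = 0` for rank-one `C_r`, so do the pairs `r < s`.
-/

section SpanChangeOfBasis

variable {R M ι : Type*} [AddCommMonoid M] [Fintype ι]

lemma span_range_sum_smul_le [Semiring R] [Module R M] (A : Matrix ι ι R) (x : ι → M) :
    Submodule.span R (Set.range fun j => ∑ i, A i j • x i) ≤ Submodule.span R (Set.range x) :=
  Submodule.span_le.2 <| Set.range_subset_iff.2 fun _ =>
    Submodule.sum_mem _ fun i _ => Submodule.smul_mem _ _ (Submodule.subset_span ⟨i, rfl⟩)

lemma sum_smul_sum_smul [CommSemiring R] [Module R M] (A B : Matrix ι ι R) (x : ι → M) (k : ι) :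
    ∑ j, B j k • ∑ i, A i j • x i = ∑ i, (A * B) i k • x i := by
  simp only [Finset.smul_sum, smul_smul, mul_apply, Finset.sum_smul]
  rw [Finset.sum_comm]
  simp only [mul_comm]

lemma span_range_sum_smul_eq [CommRing R] [Module R M] [DecidableEq ι] (A : Matrix ι ι R)
    (hA : IsUnit A.det) (x : ι → M) :
    Submodule.span R (Set.range fun j => ∑ i, A i j • x i) = Submodule.span R (Set.range x) := by
  refine (span_range_sum_smul_le A x).antisymm ?_
  have hx : x = fun k => ∑ j, A⁻¹ j k • ∑ i, A i j • x i := by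
    funext k
    simp [sum_smul_sum_smul, mul_nonsing_inv A hA, one_apply]
  conv_lhs => rw [hx]
  exact span_range_sum_smul_le _ _

end SpanChangeOfBasis

section SpanPairs

variable {R M N ι : Type*} [CommSemiring R] [AddCommMonoid M] [Module R M] [AddCommMonoid N]
  [Module R N] (B : M →ₗ[R] M →ₗ[R] N) (x : ι → M)

lemma span_range_pairs_eq_map₂ (P : ι × ι → Prop)
    (h : ∀ i j, B (x i) (x j) ∈
      Submodule.span R (Set.range fun p : {p : ι × ι // P p} => B (x p.1.1) (x p.1.2))) :
    Submodule.span R (Set.range fun p : {p : ι × ι // P p} => B (x p.1.1) (x p.1.2)) =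
      Submodule.map₂ B (Submodule.span R (Set.range x)) (Submodule.span R (Set.range x)) := by
  rw [Submodule.map₂_span_span, Set.image2_range]
  refine le_antisymm (Submodule.span_mono ?_) (Submodule.span_le.2 ?_)
  · rintro _ ⟨p, rfl⟩
    exact ⟨p.1, rfl⟩
  · rintro _ ⟨⟨i, j⟩, rfl⟩
    exact h i j

variable [LinearOrder ι]

lemma span_range_le_pairs_eq_map₂ (hB : ∀ i j, B (x i) (x j) = B (x j) (x i)) :
    Submodule.span R (Set.range fun p : {p : ι × ι // p.1 ≤ p.2} => B (x p.1.1) (x p.1.2)) =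
      Submodule.map₂ B (Submodule.span R (Set.range x)) (Submodule.span R (Set.range x)) := by
  refine span_range_pairs_eq_map₂ B x _ fun i j => ?_
  rcases le_total i j with h | h
  · exact Submodule.subset_span ⟨⟨(i, j), h⟩, rfl⟩
  · exact hB i j ▸ Submodule.subset_span ⟨⟨(j, i), h⟩, rfl⟩

lemma span_range_lt_pairs_eq_map₂ (hB : ∀ i j, B (x i) (x j) = B (x j) (x i))
    (hx : ∀ i, B (x i) (x i) = 0) :
    Submodule.span R (Set.range fun p : {p : ι × ι // p.1 < p.2} => B (x p.1.1) (x p.1.2)) =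
      Submodule.map₂ B (Submodule.span R (Set.range x)) (Submodule.span R (Set.range x)) := by
  refine span_range_pairs_eq_map₂ B x _ fun i j => ?_
  rcases lt_trichotomy i j with h | rfl | h
  · exact Submodule.subset_span ⟨⟨(i, j), h⟩, rfl⟩
  · exact hx i ▸ Submodule.zero_mem _
  · exact hB i j ▸ Submodule.subset_span ⟨⟨(j, i), h⟩, rfl⟩

end SpanPairs

section Psi

variable {d₁ d₂ : ℕ}

lemma vecPsi_comm (D F : Matrix (Fin d₁) (Fin d₂) ℝ) : vecPsi D F = vecPsi F D := by
  funext q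
  simp only [vecPsi]
  ring

lemma vecPsi_vecMulVec_self (a : Fin d₁ → ℝ) (b : Fin d₂ → ℝ) :
    vecPsi (vecMulVec a b) (vecMulVec a b) = 0 := by
  funext q
  simp only [vecPsi, vecMulVec_apply, Pi.zero_apply]
  ring

def vecPsiBilin :
    Matrix (Fin d₁) (Fin d₂) ℝ →ₗ[ℝ] Matrix (Fin d₁) (Fin d₂) ℝ →ₗ[ℝ]
      (Fin d₁ × Fin d₁ × Fin d₂ × Fin d₂ → ℝ) :=
  LinearMap.mk₂ ℝ vecPsi
    (fun _ _ _ => by funext q; simp only [vecPsi, Matrix.add_apply, Pi.add_apply]; ring)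
    (fun _ _ _ => by
      funext q; simp only [vecPsi, Matrix.smul_apply, smul_eq_mul, Pi.smul_apply]; ring)
    (fun _ _ _ => by funext q; simp only [vecPsi, Matrix.add_apply, Pi.add_apply]; ring)
    (fun _ _ _ => by
      funext q; simp only [vecPsi, Matrix.smul_apply, smul_eq_mul, Pi.smul_apply]; ring)

end Psi

theorem stmt6_general (d d₁ d₂ : ℕ)
    (u : Fin d → Fin d₁ → ℝ) (v : Fin d → Fin d₂ → ℝ)
    (Θ : Matrix (Fin d) (Fin d) ℝ) (hΘ : IsUnit Θ.det)
    (W : Fin d → Matrix (Fin d₁) (Fin d₂) ℝ)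
    (hW : ∀ ℓ, W ℓ = ∑ i, Θ⁻¹ i ℓ • Matrix.vecMulVec (u i) (v i))
    (Ω : Matrix (Fin d₁ × Fin d₁ × Fin d₂ × Fin d₂) {pr : Fin d × Fin d // pr.1 ≤ pr.2} ℝ)
    (hΩ : ∀ idx pr, Ω idx pr = vecPsi (W pr.val.1) (W pr.val.2) idx) :
    Submodule.span ℝ (Set.range (fun pr : {pr : Fin d × Fin d // pr.1 ≤ pr.2} =>
        vecPsi (W pr.val.1) (W pr.val.2))) =
      Submodule.span ℝ (Set.range (fun pr : {pr : Fin d × Fin d // pr.1 < pr.2} =>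
        vecPsi (Matrix.vecMulVec (u pr.val.1) (v pr.val.1))
          (Matrix.vecMulVec (u pr.val.2) (v pr.val.2)))) ∧
    Ω.rank = (Matrix.of fun (idx : Fin d₁ × Fin d₁ × Fin d₂ × Fin d₂)
        (pr : {pr : Fin d × Fin d // pr.1 < pr.2}) =>
        vecPsi (Matrix.vecMulVec (u pr.val.1) (v pr.val.1))
          (Matrix.vecMulVec (u pr.val.2) (v pr.val.2)) idx).rank := by
  set C : Fin d → Matrix (Fin d₁) (Fin d₂) ℝ := fun i => vecMulVec (u i) (v i)
  have hWC : Submodule.span ℝ (Set.range W) = Submodule.span ℝ (Set.range C) := by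
    rw [funext hW]
    exact span_range_sum_smul_eq _ (isUnit_nonsing_inv_det Θ hΘ) C
  have hspan : Submodule.span ℝ (Set.range fun p : {p : Fin d × Fin d // p.1 ≤ p.2} =>
      vecPsi (W p.1.1) (W p.1.2)) =
      Submodule.span ℝ (Set.range fun p : {p : Fin d × Fin d // p.1 < p.2} =>
        vecPsi (C p.1.1) (C p.1.2)) := calc
    _ = _ := span_range_le_pairs_eq_map₂ vecPsiBilin W fun i j => vecPsi_comm (W i) (W j)
    _ = _ := by rw [hWC]
    _ = _ := (span_range_lt_pairs_eq_map₂ vecPsiBilin C (fun i j => vecPsi_comm (C i) (C j))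
          fun i => vecPsi_vecMulVec_self (u i) (v i)).symm
  have hΩcols : Ω.col = fun p => vecPsi (W p.1.1) (W p.1.2) := funext fun p => funext (hΩ · p)
  refine ⟨hspan, ?_⟩
  rw [rank_eq_finrank_span_cols, rank_eq_finrank_span_cols, hΩcols]
  exact congrArg (fun S : Submodule ℝ _ => Module.finrank ℝ S) hspan

theorem stmt6 (d d₁ d₂ : ℕ) (hd : 2 ≤ d) (hd₁ : 1 ≤ d₁) (hd₂ : 1 ≤ d₂)
    (u : Fin d → Fin d₁ → ℝ) (v : Fin d → Fin d₂ → ℝ)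
    (hu : ∀ ℓ, u ℓ ⬝ᵥ u ℓ = 1) (hv : ∀ ℓ, v ℓ ⬝ᵥ v ℓ = 1)
    (hli : LinearIndependent ℝ
      (fun ℓ : Fin d => fun pr : Fin d₂ × Fin d₁ => v ℓ pr.1 * u ℓ pr.2))
    (Θ : Matrix (Fin d) (Fin d) ℝ) (hΘ : IsUnit Θ.det)
    (W : Fin d → Matrix (Fin d₁) (Fin d₂) ℝ)
    (hW : ∀ ℓ, W ℓ = ∑ i, Θ⁻¹ i ℓ • Matrix.vecMulVec (u i) (v i))
    (Ω : Matrix (Fin d₁ × Fin d₁ × Fin d₂ × Fin d₂) {pr : Fin d × Fin d // pr.1 ≤ pr.2} ℝ)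
    (hΩ : ∀ idx pr, Ω idx pr = vecPsi (W pr.val.1) (W pr.val.2) idx) :
    Submodule.span ℝ (Set.range (fun pr : {pr : Fin d × Fin d // pr.1 ≤ pr.2} =>
        vecPsi (W pr.val.1) (W pr.val.2))) =
      Submodule.span ℝ (Set.range (fun pr : {pr : Fin d × Fin d // pr.1 < pr.2} =>
        vecPsi (Matrix.vecMulVec (u pr.val.1) (v pr.val.1))
          (Matrix.vecMulVec (u pr.val.2) (v pr.val.2)))) ∧
    Ω.rank = (Matrix.of fun (idx : Fin d₁ × Fin d₁ × Fin d₂ × Fin d₂)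
        (pr : {pr : Fin d × Fin d // pr.1 < pr.2}) =>
        vecPsi (Matrix.vecMulVec (u pr.val.1) (v pr.val.1))
          (Matrix.vecMulVec (u pr.val.2) (v pr.val.2)) idx).rank :=
  stmt6_general d d₁ d₂ u v Θ hΘ W hW Ω hΩ
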